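/- arXiv:2601.10656 — 2 statements merged into one kernel-verified Lean document; each statement's English description precedes it below -/
import Mathlib

section
/- Fix β > 0, |x| > 0, |y| ≥ 0 with |x|² − |y|² = 2β, and 0 < r_min < r_max < 1. Set β̃ = (|x|² + |y|²)/2, λ_R(r) = 2β r^{2Rβ}/(|x|² − |y|² r^{4Rβ}). Then there exists C > 0 such that for all r ∈ [r_min, r_max] and all sufficiently small R > 0: |log λ_R(r) − 2Rβ̃ log r| ≤ C R². -/
/-- For `x ≥ 0`, `|log (1+x) - x| ≤ x ^ 2`. -/
lemma aux_log_bound (x : ℝ) (hx : 0 ≤ x) : |Real.log (1 + x) - x| ≤ x ^ 2 := by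
  have h1 : (0:ℝ) < 1 + x := by linarith
  have hub : Real.log (1 + x) ≤ x := by
    have := Real.log_le_sub_one_of_pos h1
    linarith
  have hlb : x - x ^ 2 ≤ Real.log (1 + x) := by
    have h2 : (0:ℝ) < (1 + x)⁻¹ := by positivity
    have hinv := Real.log_le_sub_one_of_pos h2
    rw [Real.log_inv] at hinv
    have h3 : x / (1 + x) ≤ Real.log (1 + x) := by
      have e : x / (1 + x) = 1 - (1 + x)⁻¹ := by field_simp; ring
      rw [e]; linarith
    have h4 : x - x ^ 2 ≤ x / (1 + x) := by
      rw [le_div_iff₀ h1]; nlinarith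
    linarith
  rw [abs_le]; constructor <;> linarith

/-- `|exp t - (1 + t)| ≤ (3/4) t ^ 2` for `|t| ≤ 1`. -/
lemma aux_exp_bound (t : ℝ) (ht : |t| ≤ 1) : |Real.exp t - (1 + t)| ≤ 3/4 * t^2 := by
  have := Real.exp_bound ht (n := 2) (by norm_num)
  calc |Real.exp t - (1 + t)|
      ≤ |t|^2 * ((2:ℕ).succ / ((2:ℕ).factorial * 2)) := by
        convert this using 2
        simp [Finset.sum_range_succ]
        norm_num
    _ = 3/4 * t^2 := by rw [sq_abs]; norm_num; ring

/-- Gluing estimate: on a fixed annulus `[r_min, r_max] ⊂ (0,1)`, the local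
model `log λ_R` matches the flat cone model `2Rβ̃ log r` with
`β̃ = (|x|²+|y|²)/2` up to a uniform `O(R²)` error. -/
theorem stmt9 (β nx ny rmin rmax : ℝ) (hβ : 0 < β) (hnx : 0 < nx) (hny : 0 ≤ ny)
    (h : nx ^ 2 - ny ^ 2 = 2 * β)
    (h1 : 0 < rmin) (h2 : rmin < rmax) (h3 : rmax < 1) :
    ∃ C > 0, ∃ R₀ > 0, ∀ R : ℝ, 0 < R → R < R₀ → ∀ r ∈ Set.Icc rmin rmax,
      |Real.log (2 * β * r ^ (2 * R * β) / (nx ^ 2 - ny ^ 2 * r ^ (4 * R * β)))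
        - 2 * R * ((nx ^ 2 + ny ^ 2) / 2) * Real.log r| ≤ C * R ^ 2 := by
  have hβ2 : (0:ℝ) < 2 * β := by linarith
  set c : ℝ := ny ^ 2 / (2 * β) with hc
  have hc0 : 0 ≤ c := by positivity
  have hnx2 : nx ^ 2 = 2 * β + ny ^ 2 := by linarith
  have hlrmin : Real.log rmin < 0 := Real.log_neg h1 (lt_trans h2 h3)
  set L : ℝ := 4 * β * (-Real.log rmin) with hL
  have hL0 : 0 < L := by
    have : 0 < -Real.log rmin := by linarith
    positivity
  refine ⟨(3 * c / 4 + c ^ 2) * L ^ 2 + 1, by positivity, 1 / L, by positivity, ?_⟩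
  intro R hR hR0 r hr
  obtain ⟨hr1, hr2⟩ := hr
  have hr0 : 0 < r := lt_of_lt_of_le h1 hr1
  have hlr : Real.log r < 0 := Real.log_neg hr0 (lt_of_le_of_lt hr2 h3)
  have hlr_ge : Real.log rmin ≤ Real.log r := Real.log_le_log h1 hr1
  set t : ℝ := 4 * R * β * Real.log r with ht
  have ht0 : t ≤ 0 := by
    have : 0 < 4 * R * β := by positivity
    nlinarith
  have htabs : |t| ≤ R * L := by
    rw [abs_of_nonpos ht0, hL]
    nlinarith
  have ht1 : |t| ≤ 1 := by
    have hRL : R * L ≤ 1 := by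
      rw [← le_div_iff₀ hL0]
      linarith
    linarith
  have hr4 : r ^ (4 * R * β) = Real.exp t := by
    rw [Real.rpow_def_of_pos hr0, ht]; ring_nf
  have hr2' : r ^ (2 * R * β) = Real.exp (2 * R * β * Real.log r) := by
    rw [Real.rpow_def_of_pos hr0]; ring_nf
  set u : ℝ := 1 - Real.exp t with hu
  have hu0 : 0 ≤ u := by
    have : Real.exp t ≤ 1 := Real.exp_le_one_iff.2 ht0
    simp only [hu]; linarith
  have hut : u ≤ -t := by
    have := Real.add_one_le_exp t
    simp only [hu]; linarith
  have hD : nx ^ 2 - ny ^ 2 * r ^ (4 * R * β) = 2 * β * (1 + c * u) := by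
    rw [hr4, hnx2, hu, hc]
    field_simp
    ring
  have hcu0 : (0:ℝ) < 1 + c * u := by nlinarith
  have hlog : Real.log (2 * β * r ^ (2 * R * β) / (nx ^ 2 - ny ^ 2 * r ^ (4 * R * β)))
      = Real.log (2 * β) + 2 * R * β * Real.log r
        - (Real.log (2 * β) + Real.log (1 + c * u)) := by
    rw [hD, hr2', Real.log_div (by positivity) (by positivity),
      Real.log_mul hβ2.ne' (Real.exp_ne_zero _), Real.log_exp,
      Real.log_mul hβ2.ne' hcu0.ne']
  rw [hlog]
  have keq : Real.log (2 * β) + 2 * R * β * Real.log r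
        - (Real.log (2 * β) + Real.log (1 + c * u))
        - 2 * R * ((nx ^ 2 + ny ^ 2) / 2) * Real.log r
      = -(c * t + Real.log (1 + c * u)) := by
    have e : 2 * R * ((nx ^ 2 + ny ^ 2) / 2) * Real.log r
        = 2 * R * β * Real.log r + c * t := by
      rw [hnx2, hc, ht]
      field_simp
      ring
    rw [e]; ring
  rw [keq, abs_neg]
  have e1 : |Real.exp t - (1 + t)| ≤ 3/4 * t^2 := aux_exp_bound t ht1
  have e2 : |Real.log (1 + c * u) - c * u| ≤ (c * u) ^ 2 :=
    aux_log_bound _ (by positivity)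
  have hu_abs : u ≤ |t| := by rw [abs_of_nonpos ht0]; exact hut
  have husq : u ^ 2 ≤ t ^ 2 := by
    calc u ^ 2 ≤ |t| ^ 2 := pow_le_pow_left₀ hu0 hu_abs 2
      _ = t ^ 2 := sq_abs t
  have ht2 : t ^ 2 ≤ L ^ 2 * R ^ 2 := by
    calc t ^ 2 = |t| ^ 2 := (sq_abs t).symm
      _ ≤ (R * L) ^ 2 := pow_le_pow_left₀ (abs_nonneg t) htabs 2
      _ = L ^ 2 * R ^ 2 := by ring
  have split : c * t + Real.log (1 + c * u)
      = -(c * (Real.exp t - (1 + t))) + (Real.log (1 + c * u) - c * u) := by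
    rw [hu]; ring
  calc |c * t + Real.log (1 + c * u)|
      ≤ |-(c * (Real.exp t - (1 + t)))| + |Real.log (1 + c * u) - c * u| := by
        rw [split]; exact abs_add_le _ _
    _ ≤ c * (3/4 * t^2) + (c * u) ^ 2 := by
        rw [abs_neg, abs_mul, abs_of_nonneg hc0]
        exact add_le_add (mul_le_mul_of_nonneg_left e1 hc0) e2
    _ ≤ (3 * c / 4 + c ^ 2) * t ^ 2 := by
        have hsq : (c * u) ^ 2 ≤ c ^ 2 * t ^ 2 := by
          calc (c * u) ^ 2 = c ^ 2 * u ^ 2 := by ring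
            _ ≤ c ^ 2 * t ^ 2 := mul_le_mul_of_nonneg_left husq (sq_nonneg c)
        have e : (3 * c / 4 + c ^ 2) * t ^ 2 = c * (3/4 * t^2) + c ^ 2 * t ^ 2 := by ring
        rw [e]
        exact add_le_add (le_refl _) hsq
    _ ≤ (3 * c / 4 + c ^ 2) * (L ^ 2 * R ^ 2) := by
        exact mul_le_mul_of_nonneg_left ht2 (by positivity)
    _ ≤ ((3 * c / 4 + c ^ 2) * L ^ 2 + 1) * R ^ 2 := by
        have e : ((3 * c / 4 + c ^ 2) * L ^ 2 + 1) * R ^ 2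
            = (3 * c / 4 + c ^ 2) * (L ^ 2 * R ^ 2) + R ^ 2 := by ring
        have := sq_nonneg R
        linarith
end

section
/- Fix β > 0, |x| > 0, |y| ≥ 0 with |x|² − |y|² = 2β, and 0 < δ ≤ 1. Then lim_{R→0⁺} 8β² R ∫₀^δ (r^{4Rβ}−1) r^{4Rβ−1} / (|x|² − |y|² r^{4Rβ})³ dr = −1/(2|x|⁴). -/
open Filter

/-- The explicit integral in the local hyperkähler pairing:
`lim_{R→0⁺} 8β² R ∫₀^δ (r^{4Rβ}−1) r^{4Rβ−1}/(|x|² − |y|² r^{4Rβ})³ dr = −1/(2|x|⁴)`. -/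
theorem stmt10 (β nx ny δ : ℝ) (hβ : 0 < β) (hnx : 0 < nx) (hny : 0 ≤ ny)
    (h : nx ^ 2 - ny ^ 2 = 2 * β) (hδ : 0 < δ) (hδ1 : δ ≤ 1) :
    Tendsto
      (fun R : ℝ => 8 * β ^ 2 * R * ∫ r in (0 : ℝ)..δ,
        (r ^ (4 * R * β) - 1) * r ^ (4 * R * β - 1)
          / (nx ^ 2 - ny ^ 2 * r ^ (4 * R * β)) ^ 3)
      (nhdsWithin 0 (Set.Ioi 0)) (nhds (-1 / (2 * nx ^ 4))) := by
  have hnx2 : 0 < nx ^ 2 := by positivity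
  -- closed form for each R > 0
  have key : ∀ R : ℝ, 0 < R →
      8 * β ^ 2 * R * (∫ r in (0 : ℝ)..δ,
        (r ^ (4 * R * β) - 1) * r ^ (4 * R * β - 1)
          / (nx ^ 2 - ny ^ 2 * r ^ (4 * R * β)) ^ 3)
      = 1/2 * ((δ ^ (4*R*β) - 1)^2 / (nx^2 - ny^2 * δ ^ (4*R*β))^2 - 1/nx^4) := by
    intro R hR
    set a : ℝ := 4 * R * β with ha_def
    have ha : 0 < a := by positivity
    -- denominator bound on [0, δ]
    have hD : ∀ r ∈ Set.Icc (0:ℝ) δ, 0 < nx ^ 2 - ny ^ 2 * r ^ a := by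
      intro r hr
      have hr1 : r ^ a ≤ 1 := Real.rpow_le_one hr.1 (le_trans hr.2 hδ1) ha.le
      have : ny ^ 2 * r ^ a ≤ ny ^ 2 := by nlinarith [sq_nonneg ny]
      nlinarith
    set F : ℝ → ℝ := fun r => (r ^ a - 1)^2 / (nx^2 - ny^2 * r ^ a)^2 with hF_def
    set f : ℝ → ℝ := fun r => (r ^ a - 1) * r ^ (a - 1)
          / (nx ^ 2 - ny ^ 2 * r ^ a) ^ 3 with hf_def
    set C : ℝ := 2 * a * (nx^2 - ny^2) with hC_def
    have hCpos : 0 < C := by rw [hC_def, h]; positivity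
    -- derivative
    have hderiv : ∀ r ∈ Set.Ioo (0:ℝ) δ, HasDerivAt F (C * f r) r := by
      intro r hr
      have hrm : r ∈ Set.Icc (0:ℝ) δ := ⟨hr.1.le, hr.2.le⟩
      have hDr := hD r hrm
      have hu : HasDerivAt (fun x : ℝ => x ^ a) (a * r ^ (a - 1)) r :=
        Real.hasDerivAt_rpow_const (Or.inl hr.1.ne')
      have hnum : HasDerivAt (fun x : ℝ => (x ^ a - 1)^2)
          (2 * (r ^ a - 1) ^ 1 * (a * r ^ (a - 1))) r := by
        simpa using (hu.sub_const 1).fun_pow 2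
      have hden : HasDerivAt (fun x : ℝ => (nx^2 - ny^2 * x ^ a)^2)
          (2 * (nx^2 - ny^2 * r ^ a) ^ 1 * (-(ny^2 * (a * r ^ (a - 1))))) r := by
        simpa using ((hu.const_mul (ny^2)).const_sub (nx^2)).fun_pow 2
      have hden0 : (nx^2 - ny^2 * r ^ a)^2 ≠ 0 := by positivity
      have := hnum.div hden hden0
      refine this.congr_deriv ?_
      rw [hf_def, hC_def]
      have hDne : nx^2 - ny^2 * r ^ a ≠ 0 := hDr.ne'
      field_simp
      ring
    -- continuity of F on [0, δ]
    have hcont_r : ContinuousOn (fun r : ℝ => r ^ a) (Set.Icc 0 δ) := fun r _ =>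
      (Real.continuousAt_rpow_const r a (Or.inr ha.le)).continuousWithinAt
    have hFcont : ContinuousOn F (Set.Icc 0 δ) := by
      apply ContinuousOn.div
      · exact ((hcont_r.sub continuousOn_const).pow 2)
      · exact (((continuousOn_const.sub (continuousOn_const.mul hcont_r))).pow 2)
      · intro r hr
        exact pow_ne_zero 2 (hD r hr).ne'
    -- integrability of f
    have hint : IntervalIntegrable f MeasureTheory.volume 0 δ := by
      have h1 : IntervalIntegrable (fun r : ℝ => r ^ (a - 1)) MeasureTheory.volume 0 δ :=
        intervalIntegral.intervalIntegrable_rpow' (by linarith)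
      have huIcc : Set.uIcc (0:ℝ) δ = Set.Icc 0 δ := Set.uIcc_of_le hδ.le
      have hg : ContinuousOn (fun r : ℝ => (r ^ a - 1) / (nx^2 - ny^2 * r ^ a)^3)
          (Set.uIcc (0:ℝ) δ) := by
        rw [huIcc]
        apply ContinuousOn.div
        · exact hcont_r.sub continuousOn_const
        · exact ((continuousOn_const.sub (continuousOn_const.mul hcont_r))).pow 3
        · intro r hr; exact pow_ne_zero 3 (hD r hr).ne'
      have := h1.mul_continuousOn hg
      apply this.congr
      intro r _
      rw [hf_def]; ring
    have hintC : IntervalIntegrable (fun r => C * f r) MeasureTheory.volume 0 δ :=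
      hint.const_mul C
    have hFTC := intervalIntegral.integral_eq_sub_of_hasDerivAt_of_le hδ.le hFcont hderiv hintC
    rw [intervalIntegral.integral_const_mul] at hFTC
    have hintval : (∫ r in (0:ℝ)..δ, f r) = (F δ - F 0) / C := by
      field_simp at hFTC ⊢
      linarith [hFTC]
    have hF0 : F 0 = 1 / nx ^ 4 := by
      rw [hF_def]
      simp [Real.zero_rpow ha.ne']
      ring
    calc 8 * β ^ 2 * R * (∫ r in (0:ℝ)..δ, f r)
        = 8 * β ^ 2 * R * ((F δ - 1/nx^4) / C) := by rw [hintval, hF0]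
      _ = 1/2 * (F δ - 1/nx^4) := by
          have hC2 : C = 16 * R * β^2 := by rw [hC_def, h, ha_def]; ring
          rw [hC2]
          have hR' : R ≠ 0 := hR.ne'
          have hβ' : β ≠ 0 := hβ.ne'
          field_simp
          ring
      _ = 1/2 * ((δ ^ (4*R*β) - 1)^2 / (nx^2 - ny^2 * δ ^ (4*R*β))^2 - 1/nx^4) := by
          rw [hF_def]
  -- the limit of the closed form
  have hδa : Tendsto (fun R : ℝ => δ ^ (4*R*β)) (nhdsWithin 0 (Set.Ioi 0)) (nhds 1) := by
    have hc : Continuous (fun R : ℝ => δ ^ (4*R*β)) := by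
      have : (fun R : ℝ => δ ^ (4*R*β)) = fun R => Real.exp (Real.log δ * (4*R*β)) := by
        funext R; rw [Real.rpow_def_of_pos hδ]
      rw [this]; fun_prop
    have := (hc.tendsto 0).mono_left (nhdsWithin_le_nhds (s := Set.Ioi (0:ℝ)))
    simpa using this
  have hG : Tendsto (fun R : ℝ => 1/2 * ((δ ^ (4*R*β) - 1)^2 / (nx^2 - ny^2 * δ ^ (4*R*β))^2 - 1/nx^4))
      (nhdsWithin 0 (Set.Ioi 0)) (nhds (-1 / (2 * nx ^ 4))) := by
    have hden1 : nx^2 - ny^2 * (1:ℝ) ≠ 0 := by rw [mul_one, h]; positivity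
    have hGc : ContinuousAt (fun u : ℝ => 1/2 * ((u - 1)^2 / (nx^2 - ny^2 * u)^2 - 1/nx^4)) 1 := by
      apply ContinuousAt.mul continuousAt_const
      apply ContinuousAt.sub _ continuousAt_const
      apply ContinuousAt.div (by fun_prop) (by fun_prop)
      exact pow_ne_zero 2 hden1
    have := hGc.tendsto.comp hδa
    have hval : 1/2 * (((1:ℝ) - 1)^2 / (nx^2 - ny^2 * 1)^2 - 1/nx^4) = -1 / (2 * nx^4) := by
      field_simp
      norm_num
    rw [hval] at this
    exact this
  apply hG.congr'
  filter_upwards [self_mem_nhdsWithin] with R hR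
  exact (key R hR).symm
end
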